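/- For a bounded measurable set Ω ⊂ ℝ³ of positive measure, the function H(x) = −(1/8π)∫_Ω |x−y| dy satisfies ΔH(x) = N_Ω(x) for all x ∈ ℝ³, where N_Ω(x) = −(1/4π)∫_Ω |x−y|⁻¹ dy is the Newtonian potential of Ω. -/

import Mathlib

noncomputable section
open MeasureTheory Real Filter Bornology

/-- The Laplacian of `u : ℝ³ → ℝ` at `x`. -/
def lap (u : EuclideanSpace ℝ (Fin 3) → ℝ) (x : EuclideanSpace ℝ (Fin 3)) : ℝ :=
  ∑ i : Fin 3, iteratedDeriv 2 (fun t : ℝ => u (x + t • EuclideanSpace.single i (1 : ℝ))) 0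

/-- The Newtonian potential of `Ω`. -/
def newt (Ω : Set (EuclideanSpace ℝ (Fin 3))) (x : EuclideanSpace ℝ (Fin 3)) : ℝ :=
  -(1 / (4 * π)) * ∫ y in Ω, ‖x - y‖⁻¹

/-- The biharmonic potential of `Ω`. -/
def biharm (Ω : Set (EuclideanSpace ℝ (Fin 3))) (x : EuclideanSpace ℝ (Fin 3)) : ℝ :=
  -(1 / (8 * π)) * ∫ y in Ω, ‖x - y‖

/-! Along the line `t ↦ x + t • eᵢ`, with `a = xᵢ - yᵢ` and `ρ² = ‖x - y‖² - (xᵢ - yᵢ)²`, one has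
`‖x + t • eᵢ - y‖ = √((a + t)² + ρ²)`, whose first two `t`-derivatives are `(a + t) / √(…)` and
`ρ² / √(…)³`. The first is bounded by `1` and the second by `1 / ρ`, uniformly in `t`; and `1 / ρ`
is integrable over the bounded set `Ω` because `ρ² ≥ 2 |xⱼ - yⱼ| |xₖ - yₖ|` for the two other
coordinates while `|u|^(-1/2)` is locally integrable on `ℝ`. So both derivatives pass under the
integral, and summing `ρ² / ‖x - y‖³` over the three directions gives `Δ ‖x - y‖ = 2 / ‖x - y‖`. -/

open Set

section SqrtSqAdd

variable {p : ℝ}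

lemma hasDerivAt_sqrt_sq_add (hp : 0 < p) (a t : ℝ) :
    HasDerivAt (fun s => √((a + s) ^ 2 + p)) ((a + t) / √((a + t) ^ 2 + p)) t := by
  have hq : 0 < √((a + t) ^ 2 + p) := by positivity
  have hd : HasDerivAt (fun s => (a + s) ^ 2 + p) (2 * (a + t)) t := by
    simpa using (((hasDerivAt_id t).const_add a).pow 2).add_const p
  convert hd.sqrt (by positivity) using 1
  field_simp

lemma hasDerivAt_div_sqrt_sq_add (hp : 0 < p) (a t : ℝ) :
    HasDerivAt (fun s => (a + s) / √((a + s) ^ 2 + p)) (p / √((a + t) ^ 2 + p) ^ 3) t := by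
  have hq : 0 < (a + t) ^ 2 + p := by positivity
  have hsq : 0 < √((a + t) ^ 2 + p) := sqrt_pos.mpr hq
  have hnum : HasDerivAt (fun s => a + s) 1 t := (hasDerivAt_id' t).const_add a
  refine (hnum.fun_div (hasDerivAt_sqrt_sq_add hp a t) hsq.ne').congr_deriv ?_
  field_simp
  rw [sq_sqrt hq.le]
  ring

lemma abs_div_sqrt_sq_add_le_one (hp : 0 ≤ p) (b : ℝ) : |b / √(b ^ 2 + p)| ≤ 1 := by
  rw [abs_div, abs_of_nonneg (sqrt_nonneg _)]
  exact div_le_one_of_le₀ (abs_le_sqrt (le_add_of_nonneg_right hp)) (sqrt_nonneg _)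

lemma div_sqrt_sq_add_pow_three_le (hp : 0 < p) (b : ℝ) : p / √(b ^ 2 + p) ^ 3 ≤ (√p)⁻¹ := by
  have hle : √p ≤ √(b ^ 2 + p) := sqrt_le_sqrt (le_add_of_nonneg_left (sq_nonneg b))
  have hsp : 0 < √p := sqrt_pos.mpr hp
  calc p / √(b ^ 2 + p) ^ 3 ≤ p / √p ^ 3 := by gcongr
    _ = (√p)⁻¹ := by rw [pow_succ, sq_sqrt hp.le]; field_simp

end SqrtSqAdd

section ParametricIntegral

variable {α : Type*} [MeasurableSpace α] {μ : Measure α} [IsFiniteMeasure μ] {a p : α → ℝ}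

lemma hasDerivAt_integral_sqrt_sq_add (ha : Measurable a) (hp : Measurable p)
    (hp0 : ∀ᵐ y ∂μ, 0 < p y) {t : ℝ} (hint : Integrable (fun y => √((a y + t) ^ 2 + p y)) μ) :
    HasDerivAt (fun s => ∫ y, √((a y + s) ^ 2 + p y) ∂μ)
      (∫ y, (a y + t) / √((a y + t) ^ 2 + p y) ∂μ) t :=
  (hasDerivAt_integral_of_dominated_loc_of_deriv_le (bound := fun _ => 1) univ_mem
    (.of_forall fun _ => (by fun_prop : Measurable _).aestronglyMeasurable) hint
    (by fun_prop : Measurable _).aestronglyMeasurable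
    (hp0.mono fun _ hy _ _ => abs_div_sqrt_sq_add_le_one hy.le _) (integrable_const 1)
    (hp0.mono fun _ hy s _ => hasDerivAt_sqrt_sq_add hy _ s)).2

lemma hasDerivAt_integral_div_sqrt_sq_add (ha : Measurable a) (hp : Measurable p)
    (hp0 : ∀ᵐ y ∂μ, 0 < p y) (hint : Integrable (fun y => (√(p y))⁻¹) μ) (t : ℝ) :
    HasDerivAt (fun s => ∫ y, (a y + s) / √((a y + s) ^ 2 + p y) ∂μ)
      (∫ y, p y / √((a y + t) ^ 2 + p y) ^ 3 ∂μ) t :=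
  (hasDerivAt_integral_of_dominated_loc_of_deriv_le univ_mem
    (.of_forall fun _ => (by fun_prop : Measurable _).aestronglyMeasurable)
    ((integrable_const 1).mono' (by fun_prop : Measurable _).aestronglyMeasurable
      (hp0.mono fun _ hy => abs_div_sqrt_sq_add_le_one hy.le _))
    (by fun_prop : Measurable _).aestronglyMeasurable
    (hp0.mono fun _ hy _ _ => by
      rw [norm_of_nonneg (by positivity)]; exact div_sqrt_sq_add_pow_three_le hy _)
    hint (hp0.mono fun _ hy s _ => hasDerivAt_div_sqrt_sq_add hy _ s)).2

end ParametricIntegral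

lemma locallyIntegrable_inv_sqrt_abs : LocallyIntegrable (fun u : ℝ => (√|u|)⁻¹) := by
  refine locallyIntegrable_of_norm_le_rpow (C := 1) (α := 1 / 2) (by simp) (by norm_num)
    (ae_of_all _ fun u => ?_) (by fun_prop)
  rw [norm_inv, norm_of_nonneg (sqrt_nonneg _), sqrt_eq_rpow, rpow_neg (norm_nonneg _), one_mul,
    norm_eq_abs]

lemma integrableOn_inv_sqrt_abs_sub (c a b : ℝ) :
    IntegrableOn (fun u : ℝ => (√|c - u|)⁻¹) (Icc a b) := by
  have h := (volume.measurePreserving_sub_left c).integrableOn_comp_preimage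
    (measurableEmbedding_subLeft c) (f := fun u : ℝ => (√|u|)⁻¹) (s := Icc (c - b) (c - a))
  rw [preimage_const_sub_Icc, sub_sub_cancel, sub_sub_cancel] at h
  exact h.mpr (locallyIntegrable_inv_sqrt_abs.integrableOn_isCompact isCompact_Icc)

section Euclidean

variable {ι : Type*} [Fintype ι]

lemma norm_add_smul_single [DecidableEq ι] (v : EuclideanSpace ℝ ι) (i : ι) (t : ℝ) :
    ‖v + t • EuclideanSpace.single i 1‖ = √((v i + t) ^ 2 + (‖v‖ ^ 2 - v i ^ 2)) := by
  rw [← sqrt_sq (norm_nonneg _), norm_add_sq_real, inner_smul_right,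
    EuclideanSpace.inner_single_right, norm_smul]
  simp only [PiLp.norm_single, conj_trivial, norm_one, mul_one, norm_eq_abs, sq_abs]
  ring_nf

lemma sq_add_sq_le_norm_sq_sub_sq [DecidableEq ι] (v : EuclideanSpace ℝ ι) {i j k : ι}
    (hij : i ≠ j) (hik : i ≠ k) (hjk : j ≠ k) : v j ^ 2 + v k ^ 2 ≤ ‖v‖ ^ 2 - v i ^ 2 := by
  have h := Finset.sum_le_sum_of_subset_of_nonneg (Finset.subset_univ {i, j, k})
    (f := fun l => ‖v l‖ ^ 2) fun _ _ _ => by positivity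
  rw [Finset.sum_insert (by simp [hij, hik]), Finset.sum_pair hjk,
    ← EuclideanSpace.norm_sq_eq] at h
  simp only [norm_eq_abs, sq_abs] at h
  linarith

lemma ae_apply_ne (j : ι) (c : ℝ) : ∀ᵐ y : EuclideanSpace ℝ ι, y j ≠ c := by
  rw [ae_iff]
  simp only [ne_eq, not_not]
  exact ((EuclideanSpace.volume_preserving_symm_measurableEquiv_toLp ι).measure_preimage
    (measurableSet_eq_fun (measurable_pi_apply j) measurable_const).nullMeasurableSet).trans
    (by rw [volume_pi]; exact Measure.pi_hyperplane (fun _ : ι => (volume : Measure ℝ)) j c)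

lemma integrableOn_inv_sqrt_abs_sub_mul {Ω : Set (EuclideanSpace ℝ ι)} (hΩ : IsBounded Ω)
    (c : EuclideanSpace ℝ ι) {j k : ι} (hjk : j ≠ k) :
    IntegrableOn (fun y => (√|c j - y j|)⁻¹ * (√|c k - y k|)⁻¹) Ω := by
  classical
  obtain ⟨R, hR⟩ := hΩ.subset_closedBall c
  let f : ι → ℝ → ℝ := fun l u => if l = j ∨ l = k then (√|c l - u|)⁻¹ else 1
  have hbox : IntegrableOn (fun w : ι → ℝ => ∏ l, f l (w l))
      (univ.pi fun l => Icc (c l - R) (c l + R)) := by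
    rw [IntegrableOn, volume_pi, Measure.restrict_pi_pi]
    refine Integrable.fintype_prod fun l => ?_
    by_cases h : l = j ∨ l = k
    · simp only [f, if_pos h]
      exact integrableOn_inv_sqrt_abs_sub (c l) _ _
    · simp only [f, if_neg h]
      exact integrable_const 1
  have hprod : ∀ w : ι → ℝ, ∏ l, f l (w l) = (√|c j - w j|)⁻¹ * (√|c k - w k|)⁻¹ := by
    intro w
    rw [Finset.prod_eq_mul j k hjk (fun l _ hl => if_neg (by tauto)) (by simp) (by simp)]
    simp
  have hE := ((EuclideanSpace.volume_preserving_symm_measurableEquiv_toLp ι)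
    |>.integrableOn_comp_preimage (MeasurableEquiv.measurableEmbedding _)).mpr hbox
  simp only [MeasurableEquiv.coe_toLp_symm, Function.comp_def, hprod] at hE
  refine hE.mono_set fun y hy => mem_univ_pi.mpr fun l => ?_
  have h := (PiLp.norm_apply_le (y - c) l).trans (mem_closedBall_iff_norm.mp (hR hy))
  rw [PiLp.sub_apply, norm_eq_abs, abs_le] at h
  exact ⟨by linarith, by linarith⟩

lemma ae_pos_norm_sq_sub_sq [DecidableEq ι] (x : EuclideanSpace ℝ ι) {i j k : ι} (hij : i ≠ j)
    (hik : i ≠ k) (hjk : j ≠ k) : ∀ᵐ y : EuclideanSpace ℝ ι, 0 < ‖x - y‖ ^ 2 - (x - y) i ^ 2 := by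
  filter_upwards [ae_apply_ne j (x j)] with y hy
  have hj : (x - y) j ≠ 0 := by rw [PiLp.sub_apply, sub_ne_zero]; exact hy.symm
  linarith [sq_add_sq_le_norm_sq_sub_sq (x - y) hij hik hjk, pow_pos (abs_pos.mpr hj) 2,
    sq_abs ((x - y) j), sq_nonneg ((x - y) k)]

lemma integrableOn_inv_sqrt_norm_sq_sub_sq [DecidableEq ι] {Ω : Set (EuclideanSpace ℝ ι)}
    (hΩ : IsBounded Ω) (x : EuclideanSpace ℝ ι) {i j k : ι} (hij : i ≠ j) (hik : i ≠ k)
    (hjk : j ≠ k) : IntegrableOn (fun y => (√(‖x - y‖ ^ 2 - (x - y) i ^ 2))⁻¹) Ω := by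
  refine (integrableOn_inv_sqrt_abs_sub_mul hΩ x hjk).mono'
    (by fun_prop : Measurable _).aestronglyMeasurable ?_
  filter_upwards [ae_restrict_of_ae (ae_apply_ne j (x j)),
    ae_restrict_of_ae (ae_apply_ne k (x k))] with y hj hk
  have hA : 0 < |x j - y j| := abs_pos.mpr (sub_ne_zero.mpr hj.symm)
  have hB : 0 < |x k - y k| := abs_pos.mpr (sub_ne_zero.mpr hk.symm)
  have hle : |x j - y j| * |x k - y k| ≤ ‖x - y‖ ^ 2 - (x - y) i ^ 2 := by
    have h := sq_add_sq_le_norm_sq_sub_sq (x - y) hij hik hjk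
    rw [PiLp.sub_apply, PiLp.sub_apply, ← sq_abs, ← sq_abs (x k - y k)] at h
    nlinarith [sq_nonneg (|x j - y j| - |x k - y k|)]
  rw [norm_of_nonneg (by positivity), ← mul_inv, ← sqrt_mul (abs_nonneg _)]
  exact inv_anti₀ (by positivity) (sqrt_le_sqrt hle)

lemma integrableOn_norm_sq_sub_sq_div_norm_pow_three [DecidableEq ι]
    {Ω : Set (EuclideanSpace ℝ ι)} (hΩ : IsBounded Ω) (x : EuclideanSpace ℝ ι) {i j k : ι}
    (hij : i ≠ j) (hik : i ≠ k) (hjk : j ≠ k) :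
    IntegrableOn (fun y => (‖x - y‖ ^ 2 - (x - y) i ^ 2) / ‖x - y‖ ^ 3) Ω := by
  refine (integrableOn_inv_sqrt_norm_sq_sub_sq hΩ x hij hik hjk).mono'
    (by fun_prop : Measurable _).aestronglyMeasurable ?_
  filter_upwards [ae_restrict_of_ae (ae_pos_norm_sq_sub_sq x hij hik hjk)] with y hy
  rw [norm_of_nonneg (by positivity)]
  have h := div_sqrt_sq_add_pow_three_le hy ((x - y) i)
  rwa [add_sub_cancel, sqrt_sq (norm_nonneg _)] at h

theorem iteratedDeriv_two_integral_norm_add_smul_single_sub [DecidableEq ι]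
    {Ω : Set (EuclideanSpace ℝ ι)} (hΩ : IsBounded Ω) (x : EuclideanSpace ℝ ι) {i j k : ι}
    (hij : i ≠ j) (hik : i ≠ k) (hjk : j ≠ k) :
    iteratedDeriv 2 (fun t : ℝ => ∫ y in Ω, ‖x + t • EuclideanSpace.single i 1 - y‖) 0 =
      ∫ y in Ω, (‖x - y‖ ^ 2 - (x - y) i ^ 2) / ‖x - y‖ ^ 3 := by
  have : IsFiniteMeasure (volume.restrict Ω) :=
    isFiniteMeasure_restrict.mpr hΩ.measure_lt_top.ne
  set a : EuclideanSpace ℝ ι → ℝ := fun y => (x - y) i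
  set p : EuclideanSpace ℝ ι → ℝ := fun y => ‖x - y‖ ^ 2 - (x - y) i ^ 2
  have ha : Measurable a := by fun_prop
  have hp : Measurable p := by fun_prop
  have hp0 : ∀ᵐ y ∂volume.restrict Ω, 0 < p y :=
    ae_restrict_of_ae (ae_pos_norm_sq_sub_sq x hij hik hjk)
  have hnorm : ∀ t y, ‖x + t • EuclideanSpace.single i 1 - y‖ = √((a y + t) ^ 2 + p y) :=
    fun t y => by rw [add_sub_right_comm, norm_add_smul_single]
  have hint : ∀ t, Integrable (fun y => √((a y + t) ^ 2 + p y)) (volume.restrict Ω) := by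
    intro t
    simp_rw [← hnorm]
    exact ((by fun_prop : Continuous fun y => ‖x + t • EuclideanSpace.single i 1 - y‖)
      |>.locallyIntegrable.integrableOn_isCompact hΩ.isCompact_closure).mono_set subset_closure
  have hderiv : deriv (fun t : ℝ => ∫ y in Ω, ‖x + t • EuclideanSpace.single i 1 - y‖) =
      fun t => ∫ y in Ω, (a y + t) / √((a y + t) ^ 2 + p y) := by
    funext t
    simp_rw [hnorm]
    exact (hasDerivAt_integral_sqrt_sq_add ha hp hp0 (hint t)).deriv
  rw [iteratedDeriv_succ, iteratedDeriv_one, hderiv,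
    (hasDerivAt_integral_div_sqrt_sq_add ha hp hp0
      (integrableOn_inv_sqrt_norm_sq_sub_sq hΩ x hij hik hjk) 0).deriv]
  congr 1 with y
  rw [← hnorm, zero_smul, add_zero]

lemma sum_norm_sq_sub_sq_div_norm_pow_three (v : EuclideanSpace ℝ ι) :
    ∑ i, (‖v‖ ^ 2 - v i ^ 2) / ‖v‖ ^ 3 = (Fintype.card ι - 1) / ‖v‖ := by
  have hsq : ∑ i, v i ^ 2 = ‖v‖ ^ 2 := by simp [EuclideanSpace.norm_sq_eq]
  rw [← Finset.sum_div, Finset.sum_sub_distrib, hsq, Finset.sum_const, Finset.card_univ,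
    nsmul_eq_mul]
  rcases eq_or_ne ‖v‖ 0 with h | h
  · simp [h]
  · field_simp

end Euclidean

theorem stmt_4_general (Ω : Set (EuclideanSpace ℝ (Fin 3))) (hΩb : IsBounded Ω) :
    ∀ x, lap (biharm Ω) x = newt Ω x := by
  intro x
  have hdir : ∀ i : Fin 3,
      IntegrableOn (fun y => (‖x - y‖ ^ 2 - (x - y) i ^ 2) / ‖x - y‖ ^ 3) Ω ∧
      iteratedDeriv 2 (fun t : ℝ => ∫ y in Ω, ‖x + t • EuclideanSpace.single i 1 - y‖) 0 =
        ∫ y in Ω, (‖x - y‖ ^ 2 - (x - y) i ^ 2) / ‖x - y‖ ^ 3 := by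
    intro i
    obtain ⟨j, k, hij, hik, hjk⟩ : ∃ j k : Fin 3, i ≠ j ∧ i ≠ k ∧ j ≠ k := by revert i; decide
    exact ⟨integrableOn_norm_sq_sub_sq_div_norm_pow_three hΩb x hij hik hjk,
      iteratedDeriv_two_integral_norm_add_smul_single_sub hΩb x hij hik hjk⟩
  simp only [lap, biharm, iteratedDeriv_const_mul_field, (hdir _).2, ← Finset.mul_sum]
  rw [← integral_finsetSum _ fun i _ => (hdir i).1]
  simp only [fun y => sum_norm_sq_sub_sq_div_norm_pow_three (x - y), Fintype.card_fin,
    div_eq_mul_inv _ ‖_‖, integral_const_mul, newt]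
  norm_num
  ring

/-- For a bounded measurable set `Ω ⊂ ℝ³` of positive measure, the biharmonic potential
`H(x) = −(1/8π)∫_Ω |x−y| dy` satisfies `ΔH = N_Ω` everywhere. -/
theorem stmt_4 (Ω : Set (EuclideanSpace ℝ (Fin 3))) (hΩb : IsBounded Ω)
    (hΩm : MeasurableSet Ω) (hΩpos : 0 < volume Ω) :
    ∀ x, lap (biharm Ω) x = newt Ω x :=
  stmt_4_general Ω hΩb
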